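/- arXiv:1903.05255 — 5 statements merged into one kernel-verified Lean document; each statement's English description precedes it below -/
import Mathlib

section
/- Let P be a finite nonempty set of points in the Euclidean plane and w : P → ℝ a weight function. Suppose c ∈ P satisfies w(c) ≤ w(a) for all a ∈ P, and let r be a point of the plane with ‖c − r‖ ≤ 1. Then for every point p attaining the minimum of w(a) + ‖a − r‖ over {a ∈ P : ‖a − r‖ ≤ 1}, and every b ∈ P with ‖b − r‖ > 1, one has w(p) + ‖p − r‖ < w(b) + ‖b − r‖. Consequently, the minimum of w(a) + ‖a − r‖ over {a ∈ P : ‖a − r‖ ≤ 1} equals its minimum over all of P, and every minimizer over P lies in the closed unit disk centered at r. -/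
noncomputable section

abbrev Pt := EuclideanSpace ℝ (Fin 2)

/-!
A point `c` of minimum weight inside the disk of radius `ρ` about `r` has cost
`w c + dist c r ≤ w c + ρ`, while any `b` outside the disk costs `w b + dist b r > w c + ρ`.
So the disk minimizer beats every point outside the disk, and the minimum over the disk is the
global minimum.
-/

section WeightedDistance

variable {α : Type*} [PseudoMetricSpace α] {w : α → ℝ} {b c p r : α} {ρ : ℝ}

theorem add_dist_lt_add_dist_of_le (hw : w c ≤ w b) (hc : dist c r ≤ ρ) (hb : ρ < dist b r) :
    w c + dist c r < w b + dist b r := by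
  linarith

theorem dist_le_of_add_dist_le (hw : w c ≤ w p) (hc : dist c r ≤ ρ)
    (hp : w p + dist p r ≤ w c + dist c r) : dist p r ≤ ρ :=
  not_lt.1 fun hpr => (add_dist_lt_add_dist_of_le hw hc hpr).not_ge hp

variable {s : Set α}

theorem IsMinOn.add_dist_lt_of_dist_lt {t : Set α} (hcmin : IsMinOn w s c) (hct : c ∈ t)
    (hcr : dist c r ≤ ρ) (hp : IsMinOn (fun a => w a + dist a r) t p) (hb : b ∈ s)
    (hbr : ρ < dist b r) : w p + dist p r < w b + dist b r :=
  (hp hct).trans_lt (add_dist_lt_add_dist_of_le (hcmin hb) hcr hbr)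

theorem IsMinOn.dist_le_of_isMinOn_add_dist (hcmin : IsMinOn w s c) (hc : c ∈ s)
    (hcr : dist c r ≤ ρ) (hp : IsMinOn (fun a => w a + dist a r) s p) (hps : p ∈ s) :
    dist p r ≤ ρ :=
  dist_le_of_add_dist_le (hcmin hps) hcr (hp hc)

theorem Finset.inf'_filter_dist_le_eq_inf' {P : Finset α} (hc : c ∈ P) (hcmin : IsMinOn w P c)
    (hcr : dist c r ≤ ρ) :
    (P.filter (dist · r ≤ ρ)).inf' ⟨c, mem_filter.2 ⟨hc, hcr⟩⟩ (fun a => w a + dist a r)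
      = P.inf' ⟨c, hc⟩ (fun a => w a + dist a r) := by
  obtain ⟨p, hp, hpmin⟩ := P.exists_mem_eq_inf' ⟨c, hc⟩ (fun a => w a + dist a r)
  have hpmin' : IsMinOn (fun a => w a + dist a r) P p := isMinOn_iff.2 fun a ha =>
    hpmin.symm.trans_le (P.inf'_le _ ha)
  have hpr : dist p r ≤ ρ := hcmin.dist_le_of_isMinOn_add_dist hc hcr hpmin' hp
  refine le_antisymm ?_ (inf'_mono _ (filter_subset _ P) _)
  exact hpmin ▸ inf'_le _ (mem_filter.2 ⟨hp, hpr⟩)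

end WeightedDistance

/-- Lemma "firstUpdate": additively-weighted nearest-neighbor queries from a point
within distance 1 of a minimum-weight point need not be restricted to the unit disk. -/
theorem stmt_0 (P : Finset Pt) (w : Pt → ℝ) (c : Pt) (hc : c ∈ P)
    (hcmin : ∀ a ∈ P, w c ≤ w a) (r : Pt) (hcr : dist c r ≤ 1) :
    (∀ p ∈ P.filter (fun a => dist a r ≤ 1),
      (∀ a ∈ P.filter (fun a => dist a r ≤ 1), w p + dist p r ≤ w a + dist a r) →
      ∀ b ∈ P, 1 < dist b r → w p + dist p r < w b + dist b r)
    ∧ (P.filter (fun a => dist a r ≤ 1)).inf'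
        ⟨c, Finset.mem_filter.2 ⟨hc, hcr⟩⟩ (fun a => w a + dist a r)
      = P.inf' ⟨c, hc⟩ (fun a => w a + dist a r)
    ∧ ∀ p ∈ P, (∀ a ∈ P, w p + dist p r ≤ w a + dist a r) → dist p r ≤ 1 := by
  have hcmin' : IsMinOn w P c := fun a ha => hcmin a ha
  refine ⟨fun p _ hp b hb hbr => ?_, Finset.inf'_filter_dist_le_eq_inf' hc hcmin' hcr,
    fun p hp hpmin => hcmin'.dist_le_of_isMinOn_add_dist hc hcr (fun a ha => hpmin a ha) hp⟩
  exact hcmin'.add_dist_lt_of_dist_lt (Finset.mem_filter.2 ⟨hc, hcr⟩) hcr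
    (fun a ha => hp a ha) hb hbr
end
end

section
/- Let u₁, …, u_m be points in the Euclidean plane and w₁ ≤ w₂ ≤ ⋯ ≤ w_m real weights (w_j being the weight of u_j). Let v be a point of the plane such that the set I = {j : ‖u_j − v‖ ≤ 1} is nonempty, and let i be the smallest element of I. Then the minimum of w_j + ‖u_j − v‖ over all indices j with i ≤ j ≤ m equals the minimum of w_j + ‖u_j − v‖ over j ∈ I, and every index j ≥ i attaining the former minimum satisfies ‖u_j − v‖ ≤ 1. -/
noncomputable section

/-- Correctness of the Update procedure (Algorithm 2): the weighted nearest neighbor of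
`v` among the suffix starting at the first point within distance 1 of `v` coincides with
its weighted nearest neighbor among all points within distance 1 of `v`. -/
theorem stmt_2 (m : ℕ) (u : Fin m → Pt) (w : Fin m → ℝ) (hw : Monotone w)
    (v : Pt) (i : Fin m) (hi : dist (u i) v ≤ 1)
    (himin : ∀ j, dist (u j) v ≤ 1 → i ≤ j) :
    (Finset.univ.filter (fun j => i ≤ j)).inf'
        ⟨i, Finset.mem_filter.2 ⟨Finset.mem_univ i, le_refl i⟩⟩
        (fun j => w j + dist (u j) v)
      = (Finset.univ.filter (fun j => dist (u j) v ≤ 1)).inf'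
        ⟨i, Finset.mem_filter.2 ⟨Finset.mem_univ i, hi⟩⟩
        (fun j => w j + dist (u j) v)
    ∧ ∀ j, i ≤ j → (∀ k, i ≤ k → w j + dist (u j) v ≤ w k + dist (u k) v) →
        dist (u j) v ≤ 1 := by
  have key : ∀ j : Fin m, i ≤ j → ¬ dist (u j) v ≤ 1 →
      w i + dist (u i) v < w j + dist (u j) v := by
    intro j hij hj
    have h1 : (1 : ℝ) < dist (u j) v := not_le.mp hj
    have := hw hij
    linarith
  constructor
  · apply le_antisymm
    · apply Finset.le_inf'
      intro b hb
      apply Finset.inf'_le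
      simp only [Finset.mem_filter, Finset.mem_univ, true_and] at hb ⊢
      exact himin b hb
    · apply Finset.le_inf'
      intro b hb
      simp only [Finset.mem_filter, Finset.mem_univ, true_and] at hb
      by_cases hb1 : dist (u b) v ≤ 1
      · exact Finset.inf'_le _ (Finset.mem_filter.2 ⟨Finset.mem_univ b, hb1⟩)
      · calc _ ≤ w i + dist (u i) v :=
              Finset.inf'_le _ (Finset.mem_filter.2 ⟨Finset.mem_univ i, hi⟩)
          _ ≤ w b + dist (u b) v := (key b hb hb1).le
  · intro j hij hmin
    by_contra hj
    exact absurd (hmin i (le_refl i)) (not_le.mpr (key j hij hj))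
end
end

section
/- Let U be a finite set of points in the Euclidean plane and w : U → ℝ satisfy w(u) ≤ w(u') + ‖u − u'‖ for all u, u' ∈ U. Let ε > 0, let v be a point of the plane, and let u₀ ∈ U with ‖u₀ − v‖ ≤ 1. Let W = {u ∈ U : w(u₀) ≤ w(u)}, and let B ⊆ W be a nonempty subset such that for every r ∈ W there exists b ∈ B with ‖b − r‖ ≤ ε/4. Let p̃ ∈ B attain the minimum of w(b) + ‖b − v‖ over B, and define p = p̃ if ‖p̃ − v‖ ≤ 1, and p = u₀ otherwise. Then ‖p − v‖ ≤ 1, and for every r ∈ W with ‖r − v‖ ≤ 1 one has w(p) + ‖p − v‖ ≤ w(r) + ‖r − v‖ + ε/2. -/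
noncomputable section

/-- Abstract content of Lemma 10 (lem:approx): an (ε/4)-dense subset of representatives,
together with a fallback point `u₀` within unit distance of the query, yields an
approximate additively-weighted nearest neighbor within the unit disk around `v`
with additive error at most ε/2. -/
theorem stmt_5 (U : Finset Pt) (w : Pt → ℝ)
    (hw : ∀ u ∈ U, ∀ u' ∈ U, w u ≤ w u' + dist u u')
    (ε : ℝ) (hε : 0 < ε) (v u₀ : Pt) (hu₀ : u₀ ∈ U) (hu₀v : dist u₀ v ≤ 1)
    (B : Finset Pt) (hBW : B ⊆ U.filter (fun u => w u₀ ≤ w u)) (hB : B.Nonempty)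
    (hdense : ∀ r ∈ U.filter (fun u => w u₀ ≤ w u), ∃ b ∈ B, dist b r ≤ ε / 4)
    (ptilde : Pt) (hptilde : ptilde ∈ B)
    (hopt : ∀ b ∈ B, w ptilde + dist ptilde v ≤ w b + dist b v)
    (p : Pt) (hp : p = if dist ptilde v ≤ 1 then ptilde else u₀) :
    dist p v ≤ 1 ∧
      ∀ r ∈ U.filter (fun u => w u₀ ≤ w u), dist r v ≤ 1 →
        w p + dist p v ≤ w r + dist r v + ε / 2 := by
  have key : ∀ r ∈ U.filter (fun u => w u₀ ≤ w u), dist r v ≤ 1 →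
      w ptilde + dist ptilde v ≤ w r + dist r v + ε / 2 := by
    intro r hr hrv
    obtain ⟨b, hbB, hbr⟩ := hdense r hr
    have hbU : b ∈ U := (Finset.mem_filter.mp (hBW hbB)).1
    have hrU : r ∈ U := (Finset.mem_filter.mp hr).1
    have h1 : w b ≤ w r + dist b r := hw b hbU r hrU
    have h2 : dist b v ≤ dist b r + dist r v := dist_triangle b r v
    have := hopt b hbB
    linarith
  constructor
  · by_cases h : dist ptilde v ≤ 1
    · simpa [hp, h] using h
    · simpa [hp, h] using hu₀v
  · intro r hr hrv
    by_cases h : dist ptilde v ≤ 1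
    · rw [hp, if_pos h]; exact key r hr hrv
    · rw [hp, if_neg h]
      push_neg at h
      have hpt : w u₀ ≤ w ptilde := (Finset.mem_filter.mp (hBW hptilde)).2
      have := key r hr hrv
      linarith
end
end

section
/- Let S be a finite set of points in the Euclidean plane and G the weighted unit-disk graph on S. Let s, a ∈ S be in the same connected component of G and let ⟨z₀, …, z_t⟩ be an edge-minimal shortest path from s to a (so it has t edges). Then d_G(s,a) ≥ (t − 1)/2. -/
/-!
In an edge-minimal shortest walk `z₀ z₁ … z_t`, any two consecutive edges have total length
greater than `1`: otherwise `‖z₀ - z₂‖ ≤ 1` by the triangle inequality, so `z₀ z₂` is an edge (or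
`z₀ = z₂`) and skipping `z₁` gives a walk that is no longer but has fewer edges. Pairing up the
edges, the length is more than `⌊t/2⌋ ≥ (t - 1)/2`.
-/

noncomputable section

/-- The weighted unit-disk graph on a finite point set `S`: vertices are the points of
`S`, two distinct points are adjacent iff their Euclidean distance is at most 1. -/
def UDG (S : Finset Pt) : SimpleGraph {x : Pt // x ∈ S} where
  Adj a b := a ≠ b ∧ dist (a : Pt) (b : Pt) ≤ 1
  symm := by
    constructor
    intro a b hab
    exact ⟨hab.1.symm, by rw [dist_comm]; exact hab.2⟩
  loopless := by
    constructor
    intro a ha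
    exact ha.1 rfl

/-- The (weighted) length of a walk: the sum of the Euclidean lengths of its edges. -/
def wlen {S : Finset Pt} {u v : {x : Pt // x ∈ S}} (p : (UDG S).Walk u v) : ℝ :=
  (p.darts.map (fun d => dist (d.toProd.1 : Pt) (d.toProd.2 : Pt))).sum

/-- The shortest-path distance in the weighted unit-disk graph. -/
def dG (S : Finset Pt) (u v : {x : Pt // x ∈ S}) : ℝ :=
  sInf {L : ℝ | ∃ p : (UDG S).Walk u v, wlen p = L}

open SimpleGraph

section

variable {S : Finset Pt} {u v w a : {x : Pt // x ∈ S}}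

lemma wlen_nonneg (p : (UDG S).Walk u v) : 0 ≤ wlen p :=
  List.sum_nonneg <| by
    simp only [List.mem_map]
    rintro _ ⟨d, -, rfl⟩
    exact dist_nonneg

@[simp]
lemma wlen_nil : wlen (Walk.nil : (UDG S).Walk u u) = 0 := rfl

@[simp]
lemma wlen_cons (h : (UDG S).Adj u v) (p : (UDG S).Walk v w) :
    wlen (Walk.cons h p) = dist (u : Pt) (v : Pt) + wlen p := by
  simp [wlen]

lemma dG_le_wlen (p : (UDG S).Walk u v) : dG S u v ≤ wlen p :=
  csInf_le ⟨0, by rintro _ ⟨q, rfl⟩; exact wlen_nonneg q⟩ ⟨p, rfl⟩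

def IsEdgeMinimalShortest (p : (UDG S).Walk u v) : Prop :=
  (∀ q : (UDG S).Walk u v, wlen p ≤ wlen q) ∧
    ∀ q : (UDG S).Walk u v, wlen q ≤ wlen p → p.length ≤ q.length

lemma IsEdgeMinimalShortest.tail {h : (UDG S).Adj u v} {p : (UDG S).Walk v a}
    (hp : IsEdgeMinimalShortest (Walk.cons h p)) : IsEdgeMinimalShortest p := by
  refine ⟨fun q => ?_, fun q hq => ?_⟩
  · simpa using hp.1 (Walk.cons h q)
  · simpa using hp.2 (Walk.cons h q) (by simpa using hq)

lemma IsEdgeMinimalShortest.one_lt_dist_add_dist {h : (UDG S).Adj u v} {h' : (UDG S).Adj v w}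
    {p : (UDG S).Walk w a} (hp : IsEdgeMinimalShortest (Walk.cons h (Walk.cons h' p))) :
    1 < dist (u : Pt) v + dist (v : Pt) w := by
  by_contra! hle
  have huv := dist_nonneg (x := (u : Pt)) (y := v)
  have hvw := dist_nonneg (x := (v : Pt)) (y := w)
  by_cases huw : u = w
  · subst huw
    have := hp.2 p (by simp only [wlen_cons]; linarith)
    simp at this
  · have hadj : (UDG S).Adj u w := ⟨huw, (dist_triangle _ _ _).trans hle⟩
    have := hp.2 (Walk.cons hadj p) <| by
      simp only [wlen_cons]; linarith [dist_triangle (u : Pt) v w]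
    simp at this

theorem IsEdgeMinimalShortest.length_sub_one_div_two_le :
    ∀ {u : {x : Pt // x ∈ S}} {p : (UDG S).Walk u a},
      IsEdgeMinimalShortest p → ((p.length : ℝ) - 1) / 2 ≤ wlen p
  | _, .nil, _ => by norm_num
  | _, .cons _ .nil, _ => by simp [dist_nonneg]
  | _, .cons _ (.cons _ p), hp => by
    have hpair := hp.one_lt_dist_add_dist
    have htail := hp.tail.tail.length_sub_one_div_two_le
    simp only [Walk.length_cons, wlen_cons, Nat.cast_add, Nat.cast_one]
    linarith

end

/-- Inequality inside Fact 5 (fact-approx): an edge-minimal shortest path with `t`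
edges from `s` to `a` satisfies `d_G(s,a) ≥ (t-1)/2`. -/
theorem stmt_8 (S : Finset Pt) (s a : {x : Pt // x ∈ S})
    (p : (UDG S).Walk s a) (hsp : wlen p = dG S s a)
    (hmin : ∀ q : (UDG S).Walk s a, wlen q = dG S s a → p.length ≤ q.length) :
    ((p.length : ℝ) - 1) / 2 ≤ dG S s a := by
  have hp : IsEdgeMinimalShortest p :=
    ⟨fun q => hsp ▸ dG_le_wlen q,
      fun q hq => hmin q (le_antisymm (hsp ▸ hq) (dG_le_wlen q))⟩
  exact hsp ▸ hp.length_sub_one_div_two_le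
end
end

section
/- Let h ∈ ℝ and let a = (x_a, y_a) and a' = (x_{a'}, y_{a'}) be two points that lie in a common closed axis-parallel square of side length 1/2 whose top side lies on the horizontal line y = h (so in particular |x_a − x_{a'}| ≤ 1/2 and h − 1/2 ≤ y_a, y_{a'} ≤ h), and suppose x_a < x_{a'}. Let p = (x_p, y_p) and q = (x_q, y_q) be points with y_p > h and y_q > h such that ‖p − a‖ = 1 and ‖p − a'‖ > 1, and ‖q − a'‖ = 1 and ‖q − a‖ > 1. Then x_p < x_q. -/
lemma key_pos (u0 u1 v0 v1 d0 d1 : ℝ)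
    (hu : u0^2 + u1^2 = 1) (hv : v0^2 + v1^2 = 1)
    (hA : 2*(u0*d0 + u1*d1) < d0^2 + d1^2)
    (hB : -(d0^2 + d1^2) < 2*(v0*d0 + v1*d1))
    (hv1 : 0 < v1)
    (hu1d : d1 < u1)
    (hd0 : 0 < d0) (hd1 : 0 < d1) :
    u0 < v0 + d0 := by
  by_contra hcon
  push_neg at hcon
  have h1 : u0 < d0 := by nlinarith [mul_pos (sub_pos.mpr hu1d) hd1]
  have h2 : u1 - d1 < v1 := by nlinarith
  have h3 : (d0 - u0)^2 ≤ v0^2 := by nlinarith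
  have h4 : (u1 - d1)^2 < v1^2 := by nlinarith
  nlinarith

lemma key (u0 u1 v0 v1 d0 d1 : ℝ)
    (hu : u0^2 + u1^2 = 1) (hv : v0^2 + v1^2 = 1)
    (hA : 2*(u0*d0 + u1*d1) < d0^2 + d1^2)
    (hB : -(d0^2 + d1^2) < 2*(v0*d0 + v1*d1))
    (hu1 : 0 < u1) (hv1 : 0 < v1)
    (hu1d : d1 < u1) (hv1d : -d1 < v1)
    (hd0 : 0 < d0) :
    u0 < v0 + d0 := by
  rcases lt_trichotomy d1 0 with h | h | h
  · have := key_pos (-v0) v1 (-u0) u1 d0 (-d1)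
      (by nlinarith) (by nlinarith) (by nlinarith) (by nlinarith) hu1 (by linarith) hd0 (by linarith)
    linarith
  · subst h; nlinarith
  · exact key_pos u0 u1 v0 v1 d0 d1 hu hv hA hB hv1 hu1d hd0 h

noncomputable section

lemma dist_sq (x y : Pt) : dist x y ^ 2 = (x 0 - y 0)^2 + (x 1 - y 1)^2 := by
  rw [EuclideanSpace.dist_eq]
  rw [Real.sq_sqrt (by positivity)]
  simp [Fin.sum_univ_two, Real.dist_eq, sq_abs]

/-- Property (1) of Fact 8 (fact-curve) for two unit disks: on the upper envelope of the
unit disks of two points lying in a common square of side 1/2 below the line y = h,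
the boundary piece contributed by the left point lies to the left of the piece
contributed by the right point. -/
theorem stmt_13 (h : ℝ) (a a' p q : Pt)
    (hx : |a 0 - a' 0| ≤ 1 / 2)
    (hya : h - 1 / 2 ≤ a 1) (hya' : a 1 ≤ h)
    (hyb : h - 1 / 2 ≤ a' 1) (hyb' : a' 1 ≤ h)
    (hlt : a 0 < a' 0)
    (hyp : h < p 1) (hyq : h < q 1)
    (hpa : dist p a = 1) (hpa' : 1 < dist p a')
    (hqa' : dist q a' = 1) (hqa : 1 < dist q a) :
    p 0 < q 0 := by
  have e1 : (p 0 - a 0)^2 + (p 1 - a 1)^2 = 1 := by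
    rw [← dist_sq]; rw [hpa]; norm_num
  have e2 : (q 0 - a' 0)^2 + (q 1 - a' 1)^2 = 1 := by
    rw [← dist_sq]; rw [hqa']; norm_num
  have e3 : 1 < (p 0 - a' 0)^2 + (p 1 - a' 1)^2 := by
    rw [← dist_sq]; nlinarith [dist_nonneg (x := p) (y := a')]
  have e4 : 1 < (q 0 - a 0)^2 + (q 1 - a 1)^2 := by
    rw [← dist_sq]; nlinarith [dist_nonneg (x := q) (y := a)]
  have := key (p 0 - a 0) (p 1 - a 1) (q 0 - a' 0) (q 1 - a' 1)
      (a' 0 - a 0) (a' 1 - a 1) e1 e2 (by nlinarith) (by nlinarith)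
      (by linarith) (by linarith) (by linarith) (by linarith) (by linarith)
  linarith
end
end
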